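/- arXiv:1908.06318 — 6 statements merged into one kernel-verified Lean document; each statement's English description precedes it below -/
import Mathlib

section
/- For a finite nonempty set V and a set L of sequences over V, the following are equivalent: (i) (V, L) is a traversal repertoire, i.e., L satisfies axioms (T1)–(T4); (ii) L is the traversal repertoire L(G) of some signed hyperdigraph G = (V, E, σ) with node set V. -/
/-- A signed directed hypergraph: a (finite, nonempty) node type `V`, a finite
edge type `E`, each edge having a source set, a target node, and a sign
(`true` = positive, `false` = negative). -/
structure SignedHyperdigraph (V : Type*) where
  E : Type*
  finE : Finite E
  src : E → Set V
  tgt : E → V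
  sign : E → Bool

namespace SignedHyperdigraph

/-- The traversal repertoire of a signed hyperdigraph: the sequences
`⟨x₁, …, x_k⟩` such that for each position `i`, writing `A` for the set of
earlier entries, (a) `xᵢ ∉ A`; (b) some positive edge has sources inside `A`
and target `xᵢ`; and (c) no negative edge has sources inside `A` and
target `xᵢ`. -/
def repertoire {V : Type*} (G : SignedHyperdigraph V) : Set (List V) :=
  {τ | ∀ i : Fin τ.length,
    (τ.get i ∉ τ.take i.val) ∧
    (∃ e : G.E, G.sign e = true ∧ G.src e ⊆ {v | v ∈ τ.take i.val} ∧
      G.tgt e = τ.get i) ∧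
    ¬ ∃ e : G.E, G.sign e = false ∧ G.src e ⊆ {v | v ∈ τ.take i.val} ∧
      G.tgt e = τ.get i}

end SignedHyperdigraph

/-- The traversal axioms (T1)–(T4): a traversal repertoire is a set of
sequences that contains the empty sequence (T1), is simple (T2), hereditary
(T3), and has the interval property (T4). -/
def IsTraversalRepertoire {V : Type*} (L : Set (List V)) : Prop :=
  ([] ∈ L) ∧
  (∀ (τ : List V) (x : V), τ ++ [x] ∈ L → x ∉ τ) ∧
  (∀ (τ : List V) (x : V), τ ++ [x] ∈ L → τ ∈ L) ∧
  (∀ (α τ ω : List V) (x : V), (∀ v ∈ α, v ∈ τ) → (∀ v ∈ τ, v ∈ ω) →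
    τ ∈ L → α ++ [x] ∈ L → ω ++ [x] ∈ L → τ ++ [x] ∈ L)


/-!
A positive edge into `x` whose sources lie in `α̃` still applies after any `τ ⊇ α`, and a negative
one that does not fire after `ω` does not fire after any `τ ⊆ ω`: this is (T4) for `L(G)`.

Conversely, given `L`, put a positive edge `α̃ → x` whenever `α ++ [x] ∈ L`, and a negative edge
`τ̃ → x` whenever `τ ∈ L`, `τ ++ [x] ∉ L` and some positive edge into `x` has sources inside `τ̃`.
For `τ ∈ L`, a negative edge `ρ̃ → x` with `ρ̃ ⊆ τ̃` would, by (T4) applied to `α ⊆ ρ ⊆ τ`,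
contradict `τ ++ [x] ∈ L`; and if `τ ++ [x] ∉ L` although a positive edge applies, `τ` itself yields a
negative edge. So both sides extend a sequence of `L` by the same rule, and they agree.
-/

namespace SignedHyperdigraph

universe u w

variable {V : Type u} (G : SignedHyperdigraph V)

def Enables (A : Set V) (x : V) : Prop :=
  x ∉ A ∧ (∃ e : G.E, G.sign e = true ∧ G.src e ⊆ A ∧ G.tgt e = x) ∧
    ¬ ∃ e : G.E, G.sign e = false ∧ G.src e ⊆ A ∧ G.tgt e = x

theorem nil_mem_repertoire : [] ∈ G.repertoire :=
  fun i => i.elim0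

theorem append_mem_repertoire_iff (τ : List V) (x : V) :
    τ ++ [x] ∈ G.repertoire ↔ τ ∈ G.repertoire ∧ G.Enables {v | v ∈ τ} x := by
  have htake : ∀ i ≤ τ.length, (τ ++ [x]).take i = τ.take i := fun i hi => by
    simp [List.take_append, Nat.sub_eq_zero_of_le hi]
  constructor
  · intro h
    refine ⟨fun i => ?_, ?_⟩
    · simpa [List.get_eq_getElem, htake i i.isLt.le, List.getElem_append_left i.isLt]
        using h ⟨i, by simp⟩
    · simpa [Enables, List.get_eq_getElem] using h ⟨τ.length, by simp⟩
  · rintro ⟨hτ, hx⟩ ⟨i, hi⟩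
    rcases (Nat.lt_succ_iff.mp (by simpa using hi)).lt_or_eq with hi | rfl
    · simpa [List.get_eq_getElem, htake i hi.le, List.getElem_append_left hi] using hτ ⟨i, hi⟩
    · simpa [Enables, List.get_eq_getElem] using hx

theorem isTraversalRepertoire_repertoire :
    IsTraversalRepertoire G.repertoire := by
  refine ⟨G.nil_mem_repertoire, fun τ x h => ((G.append_mem_repertoire_iff τ x).1 h).2.1,
    fun τ x h => ((G.append_mem_repertoire_iff τ x).1 h).1, ?_⟩
  intro α τ ω x hατ hτω hτ hα hω
  obtain ⟨-, -, ⟨e, he, hsrc, htgt⟩, -⟩ := (G.append_mem_repertoire_iff α x).1 hα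
  obtain ⟨-, hxω, -, hneg⟩ := (G.append_mem_repertoire_iff ω x).1 hω
  refine (G.append_mem_repertoire_iff τ x).2 ⟨hτ, fun hx => hxω (hτω x hx),
    ⟨e, he, fun v hv => hατ v (hsrc hv), htgt⟩, ?_⟩
  rintro ⟨e, he, hsrc, htgt⟩
  exact hneg ⟨e, he, fun v hv => hτω v (hsrc hv), htgt⟩

theorem eq_repertoire_of_append_mem_iff {L : Set (List V)}
    (hnil : [] ∈ L) (hhered : ∀ τ x, τ ++ [x] ∈ L → τ ∈ L)
    (happend : ∀ τ ∈ L, ∀ x, τ ++ [x] ∈ L ↔ G.Enables {v | v ∈ τ} x) :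
    L = G.repertoire := by
  ext τ
  induction τ using List.reverseRecOn with
  | nil => exact iff_of_true hnil G.nil_mem_repertoire
  | append_singleton τ x ih =>
    rw [G.append_mem_repertoire_iff, ← ih]
    exact ⟨fun h => ⟨hhered τ x h, (happend τ (hhered τ x h) x).1 h⟩,
      fun ⟨hτ, hx⟩ => (happend τ hτ x).2 hx⟩

/-- The edge type is lifted so that the construction lands in every universe of edge types. -/
def ofRelations [Finite V] (pos neg : Set V → V → Prop) : SignedHyperdigraph.{u, max u w} V where
  E := ULift.{w} {p : Set V × V × Bool //
    p.2.2 = true ∧ pos p.1 p.2.1 ∨ p.2.2 = false ∧ neg p.1 p.2.1}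
  finE := inferInstance
  src e := e.down.1.1
  tgt e := e.down.1.2.1
  sign e := e.down.1.2.2

theorem enables_ofRelations_iff [Finite V] {pos neg : Set V → V → Prop} {A : Set V} {x : V} :
    (ofRelations.{u, w} pos neg).Enables A x ↔
      x ∉ A ∧ (∃ S ⊆ A, pos S x) ∧ ¬ ∃ S ⊆ A, neg S x := by
  refine and_congr_right fun _ => and_congr ⟨?_, ?_⟩ (not_congr ⟨?_, ?_⟩)
  · rintro ⟨⟨⟨S, y, b⟩, h⟩, hb, hS, hy⟩
    obtain ⟨rfl, rfl⟩ : b = true ∧ y = x := ⟨hb, hy⟩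
    exact ⟨S, hS, by simpa using h⟩
  · rintro ⟨S, hS, h⟩
    exact ⟨⟨⟨S, x, true⟩, .inl ⟨rfl, h⟩⟩, rfl, hS, rfl⟩
  · rintro ⟨⟨⟨S, y, b⟩, h⟩, hb, hS, hy⟩
    obtain ⟨rfl, rfl⟩ : b = false ∧ y = x := ⟨hb, hy⟩
    exact ⟨S, hS, by simpa using h⟩
  · rintro ⟨S, hS, h⟩
    exact ⟨⟨⟨S, x, false⟩, .inr ⟨rfl, h⟩⟩, rfl, hS, rfl⟩

def ofTraversalRepertoire [Finite V] (L : Set (List V)) : SignedHyperdigraph.{u, max u w} V :=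
  ofRelations
    (fun S x => ∃ α, α ++ [x] ∈ L ∧ {v | v ∈ α} = S)
    (fun S x => ∃ τ ∈ L, {v | v ∈ τ} = S ∧ τ ++ [x] ∉ L ∧
      ∃ α, α ++ [x] ∈ L ∧ {v | v ∈ α} ⊆ S)

theorem enables_ofTraversalRepertoire_iff [Finite V] {L : Set (List V)}
    (hL : IsTraversalRepertoire L) {τ : List V} (hτ : τ ∈ L) (x : V) :
    (ofTraversalRepertoire.{u, w} L).Enables {v | v ∈ τ} x ↔ τ ++ [x] ∈ L := by
  obtain ⟨-, hsimple, -, hinterval⟩ := hL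
  rw [ofTraversalRepertoire, enables_ofRelations_iff]
  constructor
  · rintro ⟨-, ⟨-, hS, α, hα, rfl⟩, hneg⟩
    by_contra hτx
    exact hneg ⟨_, subset_rfl, τ, hτ, rfl, hτx, α, hα, hS⟩
  · intro hτx
    refine ⟨hsimple τ x hτx, ⟨_, subset_rfl, τ, hτx, rfl⟩, ?_⟩
    rintro ⟨-, hS, ρ, hρ, rfl, hρx, α, hα, hαρ⟩
    exact hρx (hinterval α ρ τ x hαρ hS hρ hα hτx)

end SignedHyperdigraph

theorem isTraversalRepertoire_iff_exists_signedHyperdigraph_general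
    {V : Type} [Finite V] (L : Set (List V)) :
    IsTraversalRepertoire L ↔
      ∃ G : SignedHyperdigraph V, L = G.repertoire := by
  constructor
  · intro hL
    refine ⟨.ofTraversalRepertoire L, ?_⟩
    exact SignedHyperdigraph.eq_repertoire_of_append_mem_iff _ hL.1 hL.2.2.1
      fun τ hτ x => (SignedHyperdigraph.enables_ofTraversalRepertoire_iff hL hτ x).symm
  · rintro ⟨G, rfl⟩
    exact G.isTraversalRepertoire_repertoire

/-- Theorem on traversal repertoires and signed hyperdigraphs:
for a finite nonempty set `V`, a set `L` of sequences over `V` satisfies the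
traversal axioms (T1)–(T4) iff it is the traversal repertoire of some signed
hyperdigraph on `V`. -/
theorem isTraversalRepertoire_iff_exists_signedHyperdigraph
    {V : Type} [Finite V] [Nonempty V] (L : Set (List V)) :
    IsTraversalRepertoire L ↔
      ∃ G : SignedHyperdigraph V, L = G.repertoire :=
  isTraversalRepertoire_iff_exists_signedHyperdigraph_general L
end

section
/- Let (U, d) be a metric space, let p_1, …, p_m ∈ U and q_1, …, q_k ∈ U be two tuples of foci, let a ∈ ℝ^m and c ∈ ℝ^k with ‖a‖₁ = ‖c‖₁ = 1 and at least one of a, c componentwise nonnegative, and let r, s ∈ ℝ. If there exists a point u ∈ U with Σ_{i=1}^m a_i · d(p_i, u) ≤ r and Σ_{j=1}^k c_j · d(u, q_j) ≤ s (i.e., the linear ambits B[p, r; a] and B[q, s; c] intersect), then r + s ≥ Σ_{i=1}^m Σ_{j=1}^k a_i c_j · d(p_i, q_j). -/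
open Finset

lemma ambit_aux {n : ℕ} (w f b : Fin n → ℝ) (hw : ∀ j, 0 ≤ w j)
    (hw1 : ∑ j, w j = 1) (z : ℝ) (hf : ∀ j, |f j - z| ≤ b j) :
    |∑ j, w j * f j - z| ≤ ∑ j, w j * b j := by
  have h1 : ∑ j, w j * f j - z = ∑ j, w j * (f j - z) := by
    simp only [mul_sub, Finset.sum_sub_distrib, ← Finset.sum_mul, hw1, one_mul]
  rw [h1]
  calc |∑ j, w j * (f j - z)| ≤ ∑ j, |w j * (f j - z)| := Finset.abs_sum_le_sum_abs _ _
    _ ≤ ∑ j, w j * b j := Finset.sum_le_sum fun j _ => by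
        rw [abs_mul, abs_of_nonneg (hw j)]
        exact mul_le_mul_of_nonneg_left (hf j) (hw j)

lemma ambit_aux2 (w X z A : ℝ) (h : |X - z| ≤ A) : w * X ≤ w * z + |w| * A := by
  have : w * X - w * z = w * (X - z) := by ring
  nlinarith [abs_mul w (X - z), le_abs_self (w * (X - z)), abs_nonneg w,
    mul_le_mul_of_nonneg_left h (abs_nonneg w)]

/-- Linear ambit overlap in metric space: if the linear ambits
`B[p, r; a] = {u : Σᵢ aᵢ d(pᵢ, u) ≤ r}` and `B[q, s; c] = {u : Σⱼ cⱼ d(u, qⱼ) ≤ s}`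
intersect, with `‖a‖₁ = ‖c‖₁ = 1` and at least one of `a`, `c` componentwise
nonnegative, then `r + s ≥ Σᵢ Σⱼ aᵢ cⱼ d(pᵢ, qⱼ)`. -/
theorem linear_ambit_overlap {U : Type*} [MetricSpace U] {m k : ℕ}
    (p : Fin m → U) (q : Fin k → U)
    (a : Fin m → ℝ) (c : Fin k → ℝ)
    (ha1 : (∑ i, |a i|) = 1) (hc1 : (∑ j, |c j|) = 1)
    (hnn : (∀ i, 0 ≤ a i) ∨ (∀ j, 0 ≤ c j))
    (r s : ℝ)
    (hinter : ∃ u : U, (∑ i, a i * dist (p i) u) ≤ r ∧ (∑ j, c j * dist u (q j)) ≤ s) :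
    r + s ≥ ∑ i, ∑ j, a i * c j * dist (p i) (q j) := by
  obtain ⟨u, hr, hs⟩ := hinter
  rcases hnn with hA | hC
  · -- a ≥ 0
    have ha1' : ∑ i, a i = 1 := by
      rw [← ha1]; exact Finset.sum_congr rfl fun i _ => (abs_of_nonneg (hA i)).symm
    have key : ∀ j, |(∑ i, a i * dist (p i) (q j)) - dist u (q j)| ≤
        ∑ i, a i * dist (p i) u := by
      intro j
      exact ambit_aux a (fun i => dist (p i) (q j)) (fun i => dist (p i) u) hA ha1'
        (dist u (q j)) (fun i => abs_dist_sub_le _ _ _)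
    have step : ∀ j, c j * (∑ i, a i * dist (p i) (q j)) ≤
        c j * dist u (q j) + |c j| * (∑ i, a i * dist (p i) u) :=
      fun j => ambit_aux2 _ _ _ _ (key j)
    calc ∑ i, ∑ j, a i * c j * dist (p i) (q j)
        = ∑ j, c j * ∑ i, a i * dist (p i) (q j) := by
          rw [Finset.sum_comm]
          exact Finset.sum_congr rfl fun j _ => by rw [Finset.mul_sum]; exact Finset.sum_congr rfl fun _ _ => by ring
      _ ≤ ∑ j, (c j * dist u (q j) + |c j| * (∑ i, a i * dist (p i) u)) :=
          Finset.sum_le_sum fun j _ => step j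
      _ = (∑ j, c j * dist u (q j)) + (∑ i, a i * dist (p i) u) := by
          rw [Finset.sum_add_distrib, ← Finset.sum_mul, hc1, one_mul]
      _ ≤ s + r := add_le_add hs hr
      _ = r + s := by ring
  · -- c ≥ 0
    have hc1' : ∑ j, c j = 1 := by
      rw [← hc1]; exact Finset.sum_congr rfl fun j _ => (abs_of_nonneg (hC j)).symm
    have key : ∀ i, |(∑ j, c j * dist (p i) (q j)) - dist (p i) u| ≤
        ∑ j, c j * dist u (q j) := by
      intro i
      refine ambit_aux c (fun j => dist (p i) (q j)) (fun j => dist u (q j)) hC hc1'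
        (dist (p i) u) (fun j => ?_)
      simpa [dist_comm] using abs_dist_sub_le (q j) u (p i)
    have step : ∀ i, a i * (∑ j, c j * dist (p i) (q j)) ≤
        a i * dist (p i) u + |a i| * (∑ j, c j * dist u (q j)) :=
      fun i => ambit_aux2 _ _ _ _ (key i)
    calc ∑ i, ∑ j, a i * c j * dist (p i) (q j)
        = ∑ i, a i * ∑ j, c j * dist (p i) (q j) := by
          exact Finset.sum_congr rfl fun i _ => by rw [Finset.mul_sum]; exact Finset.sum_congr rfl fun _ _ => by ring
      _ ≤ ∑ i, (a i * dist (p i) u + |a i| * (∑ j, c j * dist u (q j))) :=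
          Finset.sum_le_sum fun i _ => step i
      _ = (∑ i, a i * dist (p i) u) + (∑ j, c j * dist u (q j)) := by
          rw [Finset.sum_add_distrib, ← Finset.sum_mul, ha1, one_mul]
      _ ≤ r + s := add_le_add hr hs
end

section
/- Let (U, d) be a metric space and let p_1, …, p_m, q_1, …, q_k, u be points of U. Write x_i = d(p_i, u), y_j = d(u, q_j), and z_{ij} = d(p_i, q_j) for i = 1, …, m and j = 1, …, k. Then for all a ∈ ℝ^m and c ∈ ℝ^k such that at least one of a, c is componentwise nonnegative, ‖c‖₁ · Σ_{i=1}^m a_i x_i + ‖a‖₁ · Σ_{j=1}^k c_j y_j ≥ Σ_{i=1}^m Σ_{j=1}^k a_i c_j z_{ij}. -/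
open Finset

/-- Lemma on weighted triangle inequalities for ambits:
in a metric space, with `x_i = d(p_i, u)`, `y_j = d(u, q_j)`, `z_{ij} = d(p_i, q_j)`,
for all weight vectors `a`, `c` with at least one of them componentwise nonnegative,
`‖c‖₁ · Σᵢ aᵢ xᵢ + ‖a‖₁ · Σⱼ cⱼ yⱼ ≥ Σᵢ Σⱼ aᵢ cⱼ z_{ij}`. -/
theorem weighted_triangle_lemma {U : Type*} [MetricSpace U] {m k : ℕ}
    (p : Fin m → U) (q : Fin k → U) (u : U)
    (a : Fin m → ℝ) (c : Fin k → ℝ)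
    (hnn : (∀ i, 0 ≤ a i) ∨ (∀ j, 0 ≤ c j)) :
    (∑ j, |c j|) * (∑ i, a i * dist (p i) u)
      + (∑ i, |a i|) * (∑ j, c j * dist u (q j))
      ≥ ∑ i, ∑ j, a i * c j * dist (p i) (q j) := by
  rw [ge_iff_le]
  have key : ∀ i j, a i * c j * dist (p i) (q j)
      ≤ |c j| * (a i * dist (p i) u) + |a i| * (c j * dist u (q j)) := by
    intro i j
    have htri := dist_triangle (p i) u (q j)
    have htri2 : dist u (q j) ≤ dist (p i) u + dist (p i) (q j) := by
      calc dist u (q j) ≤ dist u (p i) + dist (p i) (q j) := dist_triangle _ _ _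
        _ = dist (p i) u + dist (p i) (q j) := by rw [dist_comm]
    have htri3 : dist (p i) u ≤ dist u (q j) + dist (p i) (q j) := by
      calc dist (p i) u ≤ dist (p i) (q j) + dist (q j) u := dist_triangle _ _ _
        _ = dist u (q j) + dist (p i) (q j) := by rw [dist_comm (q j) u]; ring
    rcases hnn with h | h
    · have ha := h i
      rcases le_or_gt 0 (c j) with hc | hc
      · rw [abs_of_nonneg ha, abs_of_nonneg hc]
        nlinarith [mul_nonneg (mul_nonneg ha hc)
          (sub_nonneg.2 htri : (0:ℝ) ≤ dist (p i) u + dist u (q j) - dist (p i) (q j))]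
      · rw [abs_of_nonneg ha, abs_of_neg hc]
        nlinarith [mul_nonneg (mul_nonneg ha (neg_nonneg.2 hc.le))
          (by linarith : (0:ℝ) ≤ dist (p i) u + dist (p i) (q j) - dist u (q j))]
    · have hc := h j
      rcases le_or_gt 0 (a i) with ha | ha
      · rw [abs_of_nonneg ha, abs_of_nonneg hc]
        nlinarith [mul_nonneg (mul_nonneg ha hc)
          (sub_nonneg.2 htri : (0:ℝ) ≤ dist (p i) u + dist u (q j) - dist (p i) (q j))]
      · rw [abs_of_neg ha, abs_of_nonneg hc]
        nlinarith [mul_nonneg (mul_nonneg (neg_nonneg.2 ha.le) hc)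
          (by linarith : (0:ℝ) ≤ dist u (q j) + dist (p i) (q j) - dist (p i) u)]
  calc ∑ i, ∑ j, a i * c j * dist (p i) (q j)
      ≤ ∑ i, ∑ j, (|c j| * (a i * dist (p i) u) + |a i| * (c j * dist u (q j))) :=
        Finset.sum_le_sum fun i _ => Finset.sum_le_sum fun j _ => key i j
    _ = (∑ j, |c j|) * (∑ i, a i * dist (p i) u)
        + (∑ i, |a i|) * (∑ j, c j * dist u (q j)) := by
        have e1 : ∑ i, ∑ j, |c j| * (a i * dist (p i) u)
            = (∑ j, |c j|) * ∑ i, a i * dist (p i) u := by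
          rw [Finset.sum_comm, Finset.sum_mul]
          exact Finset.sum_congr rfl fun j _ => (Finset.mul_sum _ _ _).symm
        have e2 : ∑ i : Fin m, ∑ j, |a i| * (c j * dist u (q j))
            = (∑ i, |a i|) * ∑ j, c j * dist u (q j) := by
          rw [Finset.sum_mul]
          exact Finset.sum_congr rfl fun i _ => (Finset.mul_sum _ _ _).symm
        simp only [Finset.sum_add_distrib]; rw [e1, e2]
end

section
/- Let X = (x_{ij}) be an m×n real matrix with nonnegative entries and ẑ ∈ ℝ^m, and suppose (a, r) ∈ ℝ^m × ℝ satisfies ‖a‖₁ = 1 and (aX)_j ≤ r for all j, and attains the optimum, i.e., aẑ − r = ℓ_opt. If ẑ_i > x_{ij} for every j = 1, …, n, then a_i ≥ 0. -/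
open Finset

/-- if `(a, r)` with `‖a‖₁ = 1`, `aX ≤ r` attains the optimum
`ℓ_opt` of the coefficient-optimization problem, and `ẑᵢ > x_{ij}` for every
`j`, then `aᵢ ≥ 0`. -/
theorem optimal_coefficient_nonneg {m n : ℕ} (X : Fin m → Fin n → ℝ)
    (hX : ∀ i j, 0 ≤ X i j) (zhat : Fin m → ℝ)
    (a : Fin m → ℝ) (r : ℝ)
    (hnorm : (∑ i, |a i|) = 1)
    (hfeas : ∀ j, ∑ i, a i * X i j ≤ r)
    (hopt : IsGreatest
      {t | ∃ (b : Fin m → ℝ) (s : ℝ),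
        (∑ i', |b i'|) = 1 ∧ (∀ j, ∑ i', b i' * X i' j ≤ s) ∧
        t = (∑ i', b i' * zhat i') - s}
      ((∑ i', a i' * zhat i') - r))
    (i : Fin m) (hi : ∀ j, X i j < zhat i) :
    0 ≤ a i := by
  by_contra hneg
  push_neg at hneg
  rcases Nat.eq_zero_or_pos n with hn | hn
  · -- no constraints: decrease r to get a better value
    have hmem : ((∑ i', a i' * zhat i') - (r - 1)) ∈
        {t | ∃ (b : Fin m → ℝ) (s : ℝ),
          (∑ i', |b i'|) = 1 ∧ (∀ j, ∑ i', b i' * X i' j ≤ s) ∧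
          t = (∑ i', b i' * zhat i') - s} :=
      ⟨a, r - 1, hnorm, fun j => absurd j.isLt (by omega), rfl⟩
    have := hopt.2 hmem
    linarith
  · haveI : Nonempty (Fin n) := ⟨⟨0, hn⟩⟩
    set M : ℝ := univ.sup' univ_nonempty (fun j => X i j) with hMdef
    have hM : M < zhat i := (Finset.sup'_lt_iff _).mpr fun j _ => hi j
    have hMj : ∀ j, X i j ≤ M := fun j => Finset.le_sup' _ (mem_univ j)
    set b : Fin m → ℝ := Function.update a i (-(a i)) with hbdef
    have key : ∀ f : Fin m → ℝ,
        (∑ i', b i' * f i') = (∑ i', a i' * f i') - 2 * a i * f i := by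
      intro f
      have h1 : ∀ i', b i' * f i' =
          a i' * f i' - (if i' = i then 2 * a i * f i else 0) := by
        intro i'
        by_cases h : i' = i
        · subst h; simp [hbdef, Function.update_self]; ring
        · simp [hbdef, Function.update_of_ne h, h]
      rw [Finset.sum_congr rfl fun i' _ => h1 i', Finset.sum_sub_distrib,
        Finset.sum_ite_eq' univ i]
      simp
    have hbnorm : (∑ i', |b i'|) = 1 := by
      rw [← hnorm]
      apply Finset.sum_congr rfl
      intro i' _
      by_cases h : i' = i
      · subst h; simp [hbdef]
      · simp [hbdef, Function.update_of_ne h, h]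
    have hbfeas : ∀ j, ∑ i', b i' * X i' j ≤ r - 2 * a i * M := by
      intro j
      rw [key]
      have h1 := hfeas j
      have h2 := hMj j
      nlinarith
    have hmem : ((∑ i', b i' * zhat i') - (r - 2 * a i * M)) ∈
        {t | ∃ (b : Fin m → ℝ) (s : ℝ),
          (∑ i', |b i'|) = 1 ∧ (∀ j, ∑ i', b i' * X i' j ≤ s) ∧
          t = (∑ i', b i' * zhat i') - s} :=
      ⟨b, r - 2 * a i * M, hbnorm, hbfeas, rfl⟩
    have hle := hopt.2 hmem
    rw [key] at hle
    nlinarith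
end

section
/- Let (U, d) be a metric space, let p_1, …, p_m ∈ U (the foci) and u_1, …, u_n ∈ U (the nonfocal points) with n ≥ 1, let a ∈ ℝ^m with a ≥ 0 componentwise and Σ_i a_i = 1, and let r ≥ 0 be such that Σ_{i=1}^m a_i · d(u_j, p_i) ≤ r for every j = 1, …, n. Then for every j: (i) d(u_j, u_k) ≤ 2r for all k = 1, …, n; (ii) there exists an index i with d(u_j, p_i) ≤ r; and consequently (iii) among the other n + m − 1 points p_1, …, p_m, u_1, …, u_n (excluding u_j itself) at least n lie within distance 2r of u_j. -/
open Finset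

/-- geometric fact behind the 2-approximation for simple focus
selection: if every nonfocal point `u_j` has weighted focal remoteness at most
`r` (with nonnegative weights summing to `1`), then for every `j`:
(i) every other nonfocal point is within `2r` of `u_j`;
(ii) some focus is within `r` of `u_j`; and consequently
(iii) among the other `n + m − 1` points (foci and nonfocal points, excluding
`u_j` itself), at least `n` lie within distance `2r` of `u_j`. -/
theorem focus_selection_two_approx {U : Type*} [MetricSpace U] {m n : ℕ}
    (hn : 1 ≤ n) (p : Fin m → U) (u : Fin n → U)
    (a : Fin m → ℝ) (ha : ∀ i, 0 ≤ a i) (hsum : ∑ i, a i = 1)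
    (r : ℝ) (hr : 0 ≤ r)
    (hfeas : ∀ j, ∑ i, a i * dist (u j) (p i) ≤ r) :
    ∀ j,
      (∀ k, dist (u j) (u k) ≤ 2 * r) ∧
      (∃ i, dist (u j) (p i) ≤ r) ∧
      n ≤ {i : Fin m | dist (u j) (p i) ≤ 2 * r}.ncard
            + {k : Fin n | k ≠ j ∧ dist (u j) (u k) ≤ 2 * r}.ncard := by
  intro j
  -- part (i)
  have hi : ∀ k, dist (u j) (u k) ≤ 2 * r := by
    intro k
    have h1 : dist (u j) (u k) = ∑ i, a i * dist (u j) (u k) := by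
      rw [← Finset.sum_mul, hsum, one_mul]
    have h2 : ∑ i, a i * dist (u j) (u k)
        ≤ ∑ i, a i * (dist (u j) (p i) + dist (u k) (p i)) := by
      apply Finset.sum_le_sum
      intro i _
      exact mul_le_mul_of_nonneg_left (dist_triangle_right _ _ _) (ha i)
    have h3 : ∑ i, a i * (dist (u j) (p i) + dist (u k) (p i))
        = (∑ i, a i * dist (u j) (p i)) + ∑ i, a i * dist (u k) (p i) := by
      rw [← Finset.sum_add_distrib]
      congr 1; ext i; ring
    have := (hfeas j).trans (le_refl r)
    calc dist (u j) (u k) = ∑ i, a i * dist (u j) (u k) := h1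
      _ ≤ _ := h2
      _ = _ := h3
      _ ≤ r + r := add_le_add (hfeas j) (hfeas k)
      _ = 2 * r := by ring
  -- part (ii)
  have hex : ∃ i, dist (u j) (p i) ≤ r := by
    by_contra h
    push_neg at h
    obtain ⟨i0, hi0⟩ : ∃ i0, 0 < a i0 := by
      by_contra h'
      push_neg at h'
      have : ∀ i, a i = 0 := fun i => le_antisymm (h' i) (ha i)
      simp [this] at hsum
    have hlt : ∑ i, a i * r < ∑ i, a i * dist (u j) (p i) := by
      apply Finset.sum_lt_sum
      · intro i _
        exact mul_le_mul_of_nonneg_left (le_of_lt (h i)) (ha i)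
      · exact ⟨i0, Finset.mem_univ _, by
          exact mul_lt_mul_of_pos_left (h i0) hi0⟩
    rw [← Finset.sum_mul, hsum, one_mul] at hlt
    exact absurd (hfeas j) (not_le.mpr hlt)
  refine ⟨hi, hex, ?_⟩
  -- part (iii)
  obtain ⟨i0, hi0⟩ := hex
  have hA : 1 ≤ {i : Fin m | dist (u j) (p i) ≤ 2 * r}.ncard := by
    have hmem : i0 ∈ {i : Fin m | dist (u j) (p i) ≤ 2 * r} := by
      simp only [Set.mem_setOf_eq]
      nlinarith
    have : 0 < {i : Fin m | dist (u j) (p i) ≤ 2 * r}.ncard :=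
      (Set.ncard_pos (Set.toFinite _)).mpr ⟨i0, hmem⟩
    omega
  have hB : {k : Fin n | k ≠ j ∧ dist (u j) (u k) ≤ 2 * r} = {j}ᶜ := by
    ext k
    simp only [Set.mem_setOf_eq, Set.mem_compl_iff, Set.mem_singleton_iff]
    exact ⟨fun h => h.1, fun h => ⟨h, hi k⟩⟩
  have hBcard : {k : Fin n | k ≠ j ∧ dist (u j) (u k) ≤ 2 * r}.ncard = n - 1 := by
    rw [hB]
    rw [Set.ncard_eq_toFinset_card']
    simp [Finset.card_compl]
  omega
end

section
/- Let G = (V, E) be a finite simple graph and let D ⊆ V be a dominating set with |D| = m ≥ 1 and V \ D ≠ ∅. Then the weights a_d = 1/m for d ∈ D are nonnegative, sum to 1, and satisfy Σ_{d∈D} a_d · x_d(v) ≤ 3 − 1/m for every v ∈ V \ D. -/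
open Finset

/-- forward direction of the W[2]-hardness reduction: if `D` is a
dominating set of size `m ≥ 1` in a finite simple graph `G`, with
`x_d(v) = 2` if `d` and `v` are adjacent and `3` otherwise, then the uniform
weights `a_d = 1/m` are nonnegative, sum to `1`, and satisfy
`Σ_{d ∈ D} a_d · x_d(v) ≤ 3 − 1/m` for every vertex `v ∉ D`. -/
theorem dominating_set_gives_small_radius {V : Type*} [Fintype V] [DecidableEq V]
    (G : SimpleGraph V) [DecidableRel G.Adj]
    (D : Finset V) (m : ℕ) (hcard : D.card = m) (hm : 1 ≤ m)
    (hdom : ∀ v, v ∉ D → ∃ d ∈ D, G.Adj d v)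
    (hVD : ∃ v, v ∉ D) :
    (∀ d ∈ D, (0 : ℝ) ≤ 1 / m) ∧
    (∑ _d ∈ D, (1 : ℝ) / m) = 1 ∧
    (∀ v, v ∉ D →
      ∑ d ∈ D, (1 / (m : ℝ)) * (if G.Adj d v then (2 : ℝ) else 3) ≤ 3 - 1 / m) := by
  have hm0 : (0 : ℝ) < m := by exact_mod_cast hm
  refine ⟨fun d _ => by positivity, ?_, ?_⟩
  · rw [Finset.sum_const, hcard, nsmul_eq_mul]
    field_simp
  · intro v hv
    obtain ⟨d0, hd0, hadj⟩ := hdom v hv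
    rw [← Finset.add_sum_erase _ _ hd0]
    have h1 : (1 / (m : ℝ)) * (if G.Adj d0 v then (2 : ℝ) else 3) = 2 / m := by
      rw [if_pos hadj]; ring
    have h2 : ∑ d ∈ D.erase d0, (1 / (m : ℝ)) * (if G.Adj d v then (2 : ℝ) else 3)
        ≤ ∑ _d ∈ D.erase d0, 3 / (m : ℝ) := by
      apply Finset.sum_le_sum
      intro i _
      have h3 : (if G.Adj i v then (2:ℝ) else 3) ≤ 3 := by split <;> norm_num
      have : (1/(m:ℝ)) * (if G.Adj i v then (2:ℝ) else 3) ≤ (1/m) * 3 := by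
        apply mul_le_mul_of_nonneg_left h3 (by positivity)
      linarith [this, (by ring : (1/(m:ℝ))*3 = 3/m)]
    have hc : ((D.erase d0).card : ℝ) = m - 1 := by
      rw [Finset.card_erase_of_mem hd0, hcard]
      have : (1:ℕ) ≤ m := hm
      push_cast [Nat.cast_sub hm]
      ring
    rw [Finset.sum_const, nsmul_eq_mul, hc] at h2
    rw [h1]
    have : (m - 1 : ℝ) * (3 / m) = 3 - 3 / m := by field_simp
    rw [this] at h2
    have : 2 / (m:ℝ) + (3 - 3 / m) = 3 - 1 / m := by ring
    linarith
end
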